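/- Let x be a vector of n positive reals and E_k(x) = e_k(x)/C(n,k) the normalized elementary symmetric polynomials. Then for any integer l with 1 ≤ l ≤ n−2 and n ≥ 3: l·E_{l−1}(x)/E_l(x) − 2(l+1)·E_l(x)/E_{l+1}(x) + (l+2)·E_{l+1}(x)/E_{l+2}(x) ≥ 0. -/

import Mathlib

open BigOperators

/-- The elementary symmetric polynomial of degree `k` in the entries of `x`. -/
noncomputable def esym {n : ℕ} (k : ℕ) (x : Fin n → ℝ) : ℝ :=
  ∑ S ∈ Finset.univ.powersetCard k, ∏ i ∈ S, x i

/-- The normalized elementary symmetric polynomial `E_k(x) = e_k(x)/C(n,k)`. -/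
noncomputable def nesym {n : ℕ} (k : ℕ) (x : Fin n → ℝ) : ℝ :=
  esym k x / (n.choose k)

/-!
Differentiating `∏ (X - xᵢ)` keeps all roots real and positive and, by Vieta, preserves the
normalized means `E_k` for `k < n`, so it suffices to treat `n = l + 2`. There the substitution
`yᵢ = 1 / xᵢ` turns `E_{n-k}(x)` into `E_k(y) ∏ xᵢ`, and the inequality becomes
`e₁ - 4 e₂ / e₁ + 3 e₃ / e₂ ≥ 0` for `e_k = e_k(y)`, i.e. `4 e₂² ≤ e₁² e₂ + 3 e₁ e₃`. By Newton's
identities the difference of the two sides is `p₁ p₃ - p₂²` for the power sums `p_k` of `y`,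
which is nonnegative by Cauchy–Schwarz.
-/

open Finset Polynomial

namespace Multiset

theorem exists_fin_map_eq {α : Type*} {m : ℕ} (s : Multiset α) (hs : card s = m) :
    ∃ y : Fin m → α, univ.val.map y = s := by
  obtain rfl : m = s.toList.length := by simp [hs]
  exact ⟨s.toList.get, by rw [Fin.univ_val_map, List.ofFn_get, coe_toList]⟩

section CommSemiring

variable {R : Type*} [CommSemiring R] (s : Multiset R)

@[simp]
theorem esymm_zero_right : s.esymm 0 = 1 := by
  simp [esymm]

theorem esymm_cons_succ (a : R) (k : ℕ) :
    (a ::ₘ s).esymm (k + 1) = s.esymm (k + 1) + a * s.esymm k := by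
  simp only [esymm, powersetCard_cons, map_add, sum_add, map_map, Function.comp_def, prod_cons,
    sum_map_mul_left]

@[simp]
theorem esymm_zero_succ (k : ℕ) : (0 : Multiset R).esymm (k + 1) = 0 := rfl

theorem esymm_one_right : s.esymm 1 = s.sum := by
  induction s using Multiset.induction_on with
  | empty => simp
  | cons a s ih => rw [esymm_cons_succ, ih, esymm_zero_right, sum_cons]; ring

end CommSemiring

section CommRing

variable {R : Type*} [CommRing R] (s : Multiset R)

theorem sq_sum_eq_sum_map_sq_add_esymm :
    s.sum ^ 2 = (s.map (· ^ 2)).sum + 2 * s.esymm 2 := by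
  induction s using Multiset.induction_on with
  | empty => simp
  | cons a s ih =>
    simp only [sum_cons, map_cons, esymm_cons_succ, esymm_one_right]
    linear_combination ih

theorem sum_map_cube_eq_esymm :
    (s.map (· ^ 3)).sum = s.sum ^ 3 - 3 * s.sum * s.esymm 2 + 3 * s.esymm 3 := by
  induction s using Multiset.induction_on with
  | empty => simp
  | cons a s ih =>
    simp only [sum_cons, map_cons, esymm_cons_succ, esymm_one_right]
    linear_combination ih

end CommRing

end Multiset

namespace Polynomial

theorem Splits.derivative_of_real {p : ℝ[X]} (hp : p.Splits) : p.derivative.Splits := by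
  have hrolle := card_roots_le_derivative p
  rw [← hp.natDegree_eq_card_roots] at hrolle
  rw [splits_iff_card_roots]
  exact le_antisymm (card_roots' _) (by rw [natDegree_derivative]; omega)

theorem Splits.natDegree_mul_esymm_roots_derivative {K : Type*} [Field K] [CharZero K]
    {p : K[X]} (hp : p.Splits) (hp' : p.derivative.Splits) {j : ℕ} (hj : j < p.natDegree) :
    (p.natDegree : K) * p.derivative.roots.esymm j =
      ((p.natDegree - j : ℕ) : K) * p.roots.esymm j := by
  set d := p.natDegree
  have hlc : p.leadingCoeff ≠ 0 := leadingCoeff_ne_zero.2 (ne_zero_of_natDegree_gt hj)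
  have hcoeff := coeff_derivative p (d - 1 - j)
  rw [coeff_eq_esymm_roots_of_splits hp' (by simp; omega),
    coeff_eq_esymm_roots_of_splits hp (by omega), leadingCoeff_derivative, natDegree_derivative,
    show d - 1 - (d - 1 - j) = j by omega,
    show d - (d - 1 - j + 1) = j by omega] at hcoeff
  have hcast : ((d - 1 - j : ℕ) : K) + 1 = ((d - j : ℕ) : K) := by norm_cast; omega
  rw [hcast] at hcoeff
  apply mul_left_cancel₀ (mul_ne_zero hlc (pow_ne_zero j (neg_ne_zero.2 one_ne_zero)))
  linear_combination hcoeff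

theorem Splits.lt_of_mem_roots_derivative {p : ℝ[X]} (hp : p.Splits) {a : ℝ}
    (h : ∀ z ∈ p.roots, a < z) {r : ℝ} (hr : r ∈ p.derivative.roots) : a < r := by
  by_contra! hra
  obtain ⟨hp'0, hp'r⟩ := mem_roots'.1 hr
  have hp0 : p ≠ 0 := by rintro rfl; simp at hp'0
  have hpr : p.eval r ≠ 0 := fun h0 ↦ (h r ((mem_roots hp0).2 h0)).not_ge hra
  have hsum : (p.roots.map fun z ↦ 1 / (r - z)).sum < (p.roots.map fun _ ↦ (0 : ℝ)).sum :=
    Multiset.sum_lt_sum_of_nonempty (hp.roots_ne_zero (derivative_ne_zero.1 hp'0))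
      fun z hz ↦ one_div_neg.2 (by linarith [h z hz])
  have hlogderiv := hp.eval_derivative_eq_eval_mul_sum hpr
  rw [hp'r.eq_zero] at hlogderiv
  simp only [Multiset.map_const', Multiset.sum_replicate, smul_zero] at hsum
  exact hsum.ne ((mul_eq_zero.1 hlogderiv.symm).resolve_left hpr)

end Polynomial

section
variable {n : ℕ}

theorem esym_eq_esymm (k : ℕ) (x : Fin n → ℝ) : esym k x = (univ.val.map x).esymm k :=
  (esymm_map_val x univ k).symm

theorem esym_zero (x : Fin n → ℝ) : esym 0 x = 1 := by
  simp [esym]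

theorem esym_pos {k : ℕ} (hk : k ≤ n) {x : Fin n → ℝ} (hx : ∀ i, 0 < x i) : 0 < esym k x :=
  sum_pos (fun _ _ ↦ prod_pos fun i _ ↦ hx i) (powersetCard_nonempty.2 (by simpa using hk))

theorem esym_inv_mul_prod {k : ℕ} (hk : k ≤ n) {x : Fin n → ℝ} (hx : ∀ i, x i ≠ 0) :
    esym k x⁻¹ * ∏ i, x i = esym (n - k) x := by
  rw [esym, esym, sum_mul]
  refine sum_nbij' compl compl (fun S hS ↦ ?_) (fun S hS ↦ ?_) (fun S _ ↦ compl_compl S)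
    (fun S _ ↦ compl_compl S) (fun S _ ↦ ?_)
  · simp_all [card_compl]
  · simp_all [card_compl]
    omega
  · rw [← prod_mul_prod_compl S x, ← mul_assoc, Pi.inv_def, prod_inv_distrib,
      inv_mul_cancel₀ (prod_ne_zero_iff.2 fun i _ ↦ hx i), one_mul]

theorem nesym_eq_nesym_inv_mul_prod {j k : ℕ} (hjk : j + k = n) {x : Fin n → ℝ}
    (hx : ∀ i, x i ≠ 0) : nesym j x = nesym k x⁻¹ * ∏ i, x i := by
  obtain rfl : j = n - k := by omega
  rw [nesym, nesym, Nat.choose_symm (by omega), ← esym_inv_mul_prod (by omega) hx,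
    div_mul_eq_mul_div]

theorem four_mul_esym_two_sq_le (x : Fin n → ℝ) (hx : ∀ i, 0 ≤ x i) :
    4 * esym 2 x ^ 2 ≤ esym 1 x ^ 2 * esym 2 x + 3 * esym 1 x * esym 3 x := by
  have hsq := (univ.val.map x).sq_sum_eq_sum_map_sq_add_esymm
  have hcube := (univ.val.map x).sum_map_cube_eq_esymm
  simp only [Multiset.map_map, Function.comp_def, sum_map_val, ← esym_eq_esymm] at hsq hcube
  have hcs : (∑ i, x i ^ 2) ^ 2 ≤ (∑ i, x i) * ∑ i, x i ^ 3 :=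
    sum_sq_le_sum_mul_sum_of_sq_le_mul _ (fun i _ ↦ hx i) (fun i _ ↦ pow_nonneg (hx i) 3)
      fun i _ ↦ by ring_nf; rfl
  rw [esym_eq_esymm 1, Multiset.esymm_one_right, sum_map_val]
  linear_combination
    hcs + (∑ i, x i) * hcube + ((∑ i, x i) ^ 2 - 2 * esym 2 x + ∑ i, x i ^ 2) * hsq

theorem nesym_eq_of_mul_esym_eq {m k : ℕ} (hk : k ≤ m) {y : Fin m → ℝ} {x : Fin (m + 1) → ℝ}
    (h : ((m + 1 : ℕ) : ℝ) * esym k y = ((m + 1 - k : ℕ) : ℝ) * esym k x) :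
    nesym k y = nesym k x := by
  have hchoose : (m.choose k : ℝ) * (m + 1 : ℕ) = (m + 1).choose k * (m + 1 - k : ℕ) := by
    exact_mod_cast Nat.choose_mul_succ_eq m k
  have hm : (0 : ℝ) < m.choose k := by exact_mod_cast Nat.choose_pos hk
  have hm1 : (0 : ℝ) < (m + 1).choose k := by exact_mod_cast Nat.choose_pos (by omega)
  rw [nesym, nesym, div_eq_div_iff hm.ne' hm1.ne']
  apply mul_left_cancel₀ (show ((m + 1 : ℕ) : ℝ) ≠ 0 by positivity)
  linear_combination (((m + 1).choose k : ℕ) : ℝ) * h - esym k x * hchoose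

theorem exists_pos_nesym_eq_of_succ {m : ℕ} (x : Fin (m + 1) → ℝ) (hx : ∀ i, 0 < x i) :
    ∃ y : Fin m → ℝ, (∀ i, 0 < y i) ∧ ∀ k ≤ m, nesym k y = nesym k x := by
  set p : ℝ[X] := ((univ.val.map x).map (X - C ·)).prod
  have hp : p.Splits := Splits.multisetProd (by simp [Splits.X_sub_C])
  have hroots : p.roots = univ.val.map x := roots_multiset_prod_X_sub_C _
  have hdeg : p.natDegree = m + 1 := by
    rw [natDegree_multiset_prod_X_sub_C_eq_card, Multiset.card_map, card_val, card_univ,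
      Fintype.card_fin]
  have hp' := hp.derivative_of_real
  obtain ⟨y, hy⟩ := Multiset.exists_fin_map_eq p.derivative.roots
    (by rw [← hp'.natDegree_eq_card_roots, natDegree_derivative, hdeg, Nat.add_sub_cancel])
  have hroots_pos : ∀ z ∈ p.roots, 0 < z := by
    simpa only [hroots, Multiset.forall_mem_map_iff, mem_val, mem_univ, true_imp_iff] using hx
  refine ⟨y, fun i ↦ hp.lt_of_mem_roots_derivative hroots_pos
    (hy ▸ Multiset.mem_map_of_mem y (mem_univ i)), fun k hk ↦ nesym_eq_of_mul_esym_eq hk ?_⟩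
  have hvieta := hp.natDegree_mul_esymm_roots_derivative hp' (j := k) (by omega)
  rwa [hdeg, ← hy, hroots, ← esym_eq_esymm, ← esym_eq_esymm] at hvieta

theorem nesym_ratio_second_diff_nonneg_of_fin_add_two {l : ℕ} (hl : 1 ≤ l) (x : Fin (l + 2) → ℝ)
    (hx : ∀ i, 0 < x i) :
    0 ≤ l * nesym (l - 1) x / nesym l x - 2 * ((l + 1) * nesym l x / nesym (l + 1) x)
      + (l + 2) * nesym (l + 1) x / nesym (l + 2) x := by
  have hx0 : ∀ i, x i ≠ 0 := fun i ↦ (hx i).ne'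
  have hxinv : ∀ i, 0 < x⁻¹ i := fun i ↦ inv_pos.2 (hx i)
  have h3 := nesym_eq_nesym_inv_mul_prod (j := l - 1) (k := 3) (by omega) hx0
  have h2 := nesym_eq_nesym_inv_mul_prod (j := l) (k := 2) (by omega) hx0
  have h1 := nesym_eq_nesym_inv_mul_prod (j := l + 1) (k := 1) (by omega) hx0
  have h0 := nesym_eq_nesym_inv_mul_prod (j := l + 2) (k := 0) (by omega) hx0
  have c1 : ((l + 2).choose 1 : ℝ) = l + 2 := by simp
  have c2 : ((l + 2).choose 2 : ℝ) = (l + 2) * (l + 1) / 2 := by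
    rw [Nat.cast_choose_two]; push_cast; ring
  have c3 : ((l + 2).choose 3 : ℝ) = (l + 2) * (l + 1) * l / 6 := by
    have h : ((l + 2).choose 3 * 3 : ℝ) = (l + 2).choose 2 * l := by
      exact_mod_cast Nat.choose_succ_right_eq (l + 2) 2
    rw [Nat.cast_choose_two] at h
    push_cast at h
    linear_combination h / 3
  have e1 := esym_pos (k := 1) (by omega) hxinv
  have e2 := esym_pos (k := 2) (by omega) hxinv
  have hP : 0 < ∏ i, x i := prod_pos fun i _ ↦ hx i
  have key : l * nesym (l - 1) x / nesym l x - 2 * ((l + 1) * nesym l x / nesym (l + 1) x)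
      + (l + 2) * nesym (l + 1) x / nesym (l + 2) x
      = (esym 1 x⁻¹ ^ 2 * esym 2 x⁻¹ + 3 * esym 1 x⁻¹ * esym 3 x⁻¹ - 4 * esym 2 x⁻¹ ^ 2)
        / (esym 1 x⁻¹ * esym 2 x⁻¹) := by
    rw [h3, h2, h1, h0]
    simp only [nesym, c1, c2, c3, esym_zero, Nat.choose_zero_right, Nat.cast_one]
    field_simp
    ring
  rw [key]
  exact div_nonneg (sub_nonneg.2 (four_mul_esym_two_sq_le _ fun i ↦ (hxinv i).le)) (by positivity)

end

theorem stmt_8_general (n : ℕ) (x : Fin n → ℝ) (hx : ∀ i, 0 < x i)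
    (l : ℕ) (hl : 1 ≤ l) (hl2 : l ≤ n - 2) :
    0 ≤ l * nesym (l - 1) x / nesym l x
        - 2 * ((l + 1) * nesym l x / nesym (l + 1) x)
        + (l + 2) * nesym (l + 1) x / nesym (l + 2) x := by
  replace hl2 : l + 2 ≤ n := by omega
  induction n, hl2 using Nat.le_induction with
  | base => exact nesym_ratio_second_diff_nonneg_of_fin_add_two hl x hx
  | succ m _ ih =>
    obtain ⟨y, hy, hyx⟩ := exists_pos_nesym_eq_of_succ x hx
    rw [← hyx (l - 1) (by omega), ← hyx l (by omega), ← hyx (l + 1) (by omega),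
      ← hyx (l + 2) (by omega)]
    exact ih y hy

/-- For a vector `x` of `n ≥ 3` positive reals and `1 ≤ l ≤ n − 2`:
`l E_{l−1}(x)/E_l(x) − 2(l+1) E_l(x)/E_{l+1}(x) + (l+2) E_{l+1}(x)/E_{l+2}(x) ≥ 0`. -/
theorem stmt_8 (n : ℕ) (hn : 3 ≤ n) (x : Fin n → ℝ) (hx : ∀ i, 0 < x i)
    (l : ℕ) (hl : 1 ≤ l) (hl2 : l ≤ n - 2) :
    0 ≤ l * nesym (l - 1) x / nesym l x
        - 2 * ((l + 1) * nesym l x / nesym (l + 1) x)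
        + (l + 2) * nesym (l + 1) x / nesym (l + 2) x :=
  stmt_8_general n x hx l hl hl2
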